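/- arXiv:2102.10417 — 3 statements merged into one kernel-verified Lean document; each statement's English description precedes it below -/
import Mathlib

section
/- Let ℓ be a prime and let G be a subgroup of GL₂(𝔽_ℓ) all of whose elements are upper triangular. Then either the semisimplification G^ss of G is contained in G, or G is diagonalizable, i.e., there exists P ∈ GL₂(𝔽_ℓ) such that every element of P⁻¹GP is a diagonal matrix. -/
/-!
Two upper triangular matrices with the same diagonal differ by a unipotent `[[1, s], [0, 1]]`.
If `G` contains a nontrivial unipotent, it contains all of them because `ℓ` is prime, so every
`diag(a, d)` in `G^ss` lies in `G`. Otherwise an element of `G` is determined by its diagonal.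
Then `G` is abelian, and an element `g ∈ G` with diagonal entries `a, a` is scalar: in
characteristic `ℓ`, `g ^ ℓ` is the scalar `a ^ ℓ = a`, which has the same diagonal as `g`.
So either `G` consists of diagonal matrices, or it contains some `g₀` with distinct diagonal
entries; a unipotent conjugation diagonalizes `g₀`, hence also its centralizer, which
contains `G`.
-/

/-- The semisimplification of a subgroup `G` of `GL₂(𝔽_ℓ)` consisting of upper triangular
matrices: the set of diagonal matrices `diag(a, d)` in `GL₂(𝔽_ℓ)` such that `[[a, b], [0, d]] ∈ G`
for some `b ∈ 𝔽_ℓ`. -/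
def Subgroup.semisimplification {ℓ : ℕ} (G : Subgroup (GL (Fin 2) (ZMod ℓ))) :
    Set (GL (Fin 2) (ZMod ℓ)) :=
  {g | ∃ a d b : ZMod ℓ, (g : Matrix (Fin 2) (Fin 2) (ZMod ℓ)) = !![a, 0; 0, d] ∧
    ∃ h ∈ G, (h : Matrix (Fin 2) (Fin 2) (ZMod ℓ)) = !![a, b; 0, d]}

open Matrix Matrix.GeneralLinearGroup

namespace Matrix

theorem isDiag_fin_two_iff {α : Type*} [Zero α] {M : Matrix (Fin 2) (Fin 2) α} :
    M.IsDiag ↔ M 0 1 = 0 ∧ M 1 0 = 0 := by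
  refine ⟨fun h => ⟨h (by decide), h (by decide)⟩, fun ⟨h01, h10⟩ i j hij => ?_⟩
  fin_cases i <;> fin_cases j <;> simp_all

theorem isDiag_of_commute_diagonal {n R : Type*} [Fintype n] [DecidableEq n] [CommRing R]
    [NoZeroDivisors R] {M : Matrix n n R} {v : n → R} (hv : Function.Injective v)
    (h : Commute M (diagonal v)) : M.IsDiag := by
  intro i j hij
  have hij' : M i j * v j = v i * M i j := by
    simpa only [mul_diagonal, diagonal_mul] using congr_fun (congr_fun h.eq i) j
  have : M i j * (v j - v i) = 0 := by rw [mul_sub, hij', mul_comm, sub_self]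
  exact (mul_eq_zero.mp this).resolve_right (sub_ne_zero.mpr (hv.ne hij).symm)

theorem fin_two_upper_pow_char {R : Type*} [CommRing R] (p : ℕ) [Fact p.Prime] [CharP R p]
    (a c : R) : !![a, c; 0, a] ^ p = scalar (Fin 2) (a ^ p) := by
  have hN : !![0, c; 0, (0 : R)] ^ 2 = 0 := by
    rw [sq, mul_fin_two]
    simp [← Matrix.ext_iff, Fin.forall_fin_two]
  have hsplit : !![a, c; 0, a] = scalar (Fin 2) a + !![0, c; 0, 0] := by
    ext i j
    fin_cases i <;> fin_cases j <;> simp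
  rw [hsplit, add_pow_char_of_commute p (scalar_commute a (fun _ => Commute.all _ _) _),
    ← map_pow, pow_eq_zero_of_le (Fact.out : p.Prime).two_le hN, add_zero]

namespace GeneralLinearGroup

section Field

variable {K : Type*} [Field K]

theorem apply_zero_zero_ne_zero {g : GL (Fin 2) K} (hg : g 1 0 = 0) : g 0 0 ≠ 0 := by
  intro h
  apply g.det_ne_zero
  simp [det_fin_two, h, hg]

theorem eq_mul_upperRightHom {g h : GL (Fin 2) K} (hg : g 1 0 = 0) (hh : h 1 0 = 0)
    (h00 : g 0 0 = h 0 0) (h11 : g 1 1 = h 1 1) :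
    g = h * upperRightHom ((g 0 1 - h 0 1) / h 0 0) := by
  have := apply_zero_zero_ne_zero hh
  ext i j
  fin_cases i <;> fin_cases j <;> simp [mul_apply, Fin.sum_univ_two, *]
  rw [mul_div_cancel₀ _ this, sub_add_cancel]

theorem exists_isDiag_conj_of_commute {g₀ : GL (Fin 2) K} (h10 : g₀ 1 0 = 0)
    (hne : g₀ 0 0 ≠ g₀ 1 1) :
    ∃ P : GL (Fin 2) K, ∀ g, Commute g g₀ →
      ((P⁻¹ * g * P : GL (Fin 2) K) : Matrix (Fin 2) (Fin 2) K).IsDiag := by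
  -- `t` is the solution of `(a - d) t + c = 0`, `[[a, c], [0, d]]` being `g₀`.
  set t := g₀ 0 1 / (g₀ 1 1 - g₀ 0 0)
  have hconj : ((upperRightHom (-t) * g₀ * upperRightHom t : GL (Fin 2) K) :
      Matrix (Fin 2) (Fin 2) K) = diagonal ![g₀ 0 0, g₀ 1 1] := by
    have : g₀ 1 1 - g₀ 0 0 ≠ 0 := sub_ne_zero.mpr hne.symm
    ext i j
    fin_cases i <;> fin_cases j <;>
      simp [mul_apply, vecMul, dotProduct, Fin.sum_univ_two, h10, t]
    field_simp
    ring
  refine ⟨upperRightHom t, fun g hg =>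
    isDiag_of_commute_diagonal (v := ![g₀ 0 0, g₀ 1 1]) ?_ ?_⟩
  · simpa [Function.Injective, Fin.forall_fin_two] using ⟨hne, hne.symm⟩
  · rw [← hconj, ← AddChar.map_neg_eq_inv]
    simpa using ((Commute.conj_iff (upperRightHom (-t))).mpr hg).units_val

variable {G : Subgroup (GL (Fin 2) K)}

theorem eq_of_diag_eq_of_upperRightHom_notMem (hG : ∀ g ∈ G, g 1 0 = 0)
    (hU : ∀ s ≠ 0, upperRightHom s ∉ G) {g h : GL (Fin 2) K} (hg : g ∈ G) (hh : h ∈ G)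
    (h00 : g 0 0 = h 0 0) (h11 : g 1 1 = h 1 1) : g = h := by
  have hgh := eq_mul_upperRightHom (hG g hg) (hG h hh) h00 h11
  have hs : (g 0 1 - h 0 1) / h 0 0 = 0 := by
    by_contra hs
    exact hU _ hs (inv_mul_eq_iff_eq_mul.mpr hgh ▸ G.mul_mem (G.inv_mem hh) hg)
  rw [hgh, hs, AddChar.map_zero_eq_one, mul_one]

theorem commute_of_upperRightHom_notMem (hG : ∀ g ∈ G, g 1 0 = 0)
    (hU : ∀ s ≠ 0, upperRightHom s ∉ G) {g h : GL (Fin 2) K} (hg : g ∈ G) (hh : h ∈ G) :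
    Commute g h :=
  eq_of_diag_eq_of_upperRightHom_notMem hG hU (G.mul_mem hg hh) (G.mul_mem hh hg)
    (by simp [mul_apply, Fin.sum_univ_two, hG g hg, hG h hh, mul_comm (g 0 0)])
    (by simp [mul_apply, Fin.sum_univ_two, hG g hg, hG h hh, mul_comm (g 1 1)])

end Field

variable {p : ℕ} [Fact p.Prime] {G : Subgroup (GL (Fin 2) (ZMod p))}

theorem upperRightHom_mem_of_ne_zero {e : ZMod p} (he : e ≠ 0) (heG : upperRightHom e ∈ G)
    (s : ZMod p) : upperRightHom s ∈ G := by
  have hs : s = (s / e).val • e := by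
    rw [nsmul_eq_mul, ZMod.natCast_zmod_val, div_mul_cancel₀ _ he]
  rw [hs, AddChar.map_nsmul_eq_pow]
  exact G.pow_mem heG _

theorem apply_zero_one_eq_zero_of_upperRightHom_notMem (hG : ∀ g ∈ G, g 1 0 = 0)
    (hU : ∀ s ≠ 0, upperRightHom s ∉ G) {g : GL (Fin 2) (ZMod p)} (hg : g ∈ G)
    (hgd : g 0 0 = g 1 1) : g 0 1 = 0 := by
  obtain ⟨a, c, hgm⟩ : ∃ a c, (g : Matrix (Fin 2) (Fin 2) (ZMod p)) = !![a, c; 0, a] :=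
    ⟨g 0 0, g 0 1, by ext i j; fin_cases i <;> fin_cases j <;> simp [hG g hg, hgd]⟩
  have hpow : ((g ^ p : GL (Fin 2) (ZMod p)) : Matrix (Fin 2) (Fin 2) (ZMod p)) =
      Matrix.scalar (Fin 2) a := by
    rw [Units.val_pow_eq_pow_val, hgm, fin_two_upper_pow_char, ZMod.pow_card]
  have hfix : g ^ p = g :=
    eq_of_diag_eq_of_upperRightHom_notMem hG hU (G.pow_mem hg p) hg (by simp [hpow, hgm])
      (by simp [hpow, hgm])
  simpa [hpow] using congrArg (fun M : GL (Fin 2) (ZMod p) => M 0 1) hfix.symm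

end GeneralLinearGroup

end Matrix

theorem Subgroup.semisimplification_subset_of_upperRightHom_mem {ℓ : ℕ} [Fact ℓ.Prime]
    {G : Subgroup (GL (Fin 2) (ZMod ℓ))} (hU : ∀ s, upperRightHom s ∈ G) :
    G.semisimplification ⊆ G := by
  rintro g ⟨a, d, b, hg, h, hhG, hh⟩
  rw [eq_mul_upperRightHom (g := g) (h := h) (by simp [hg]) (by simp [hh]) (by simp [hg, hh])
    (by simp [hg, hh])]
  exact G.mul_mem hhG (hU _)

/-- Let `ℓ` be a prime and `G` a subgroup of `GL₂(𝔽_ℓ)` all of whose elements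
are upper triangular. Then either the semisimplification `G^ss` is contained in `G`, or `G` is
diagonalizable: there exists `P ∈ GL₂(𝔽_ℓ)` such that every element of `P⁻¹GP` is diagonal. -/
theorem semisimplification_subset_or_diagonalizable {ℓ : ℕ} (hℓ : ℓ.Prime)
    (G : Subgroup (GL (Fin 2) (ZMod ℓ)))
    (hG : ∀ g ∈ G, (g : Matrix (Fin 2) (Fin 2) (ZMod ℓ)) 1 0 = 0) :
    G.semisimplification ⊆ (G : Set (GL (Fin 2) (ZMod ℓ))) ∨
      ∃ P : GL (Fin 2) (ZMod ℓ), ∀ g ∈ G,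
        ((P⁻¹ * g * P : GL (Fin 2) (ZMod ℓ)) : Matrix (Fin 2) (Fin 2) (ZMod ℓ)).IsDiag := by
  have := Fact.mk hℓ
  by_cases hU : ∃ e ≠ 0, upperRightHom e ∈ G
  · obtain ⟨e, he, heG⟩ := hU
    exact Or.inl (G.semisimplification_subset_of_upperRightHom_mem
      (upperRightHom_mem_of_ne_zero he heG))
  push Not at hU
  right
  by_cases hsplit : ∃ g₀ ∈ G, g₀ 0 0 ≠ g₀ 1 1
  · obtain ⟨g₀, hg₀, hne⟩ := hsplit
    obtain ⟨P, hP⟩ := exists_isDiag_conj_of_commute (hG g₀ hg₀) hne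
    exact ⟨P, fun g hg => hP g (commute_of_upperRightHom_notMem hG hU hg hg₀)⟩
  · push Not at hsplit
    refine ⟨1, fun g hg => ?_⟩
    rw [inv_one, one_mul, mul_one, isDiag_fin_two_iff]
    exact ⟨apply_zero_one_eq_zero_of_upperRightHom_notMem hG hU hg (hsplit g hg), hG g hg⟩
end

section
/- Let ℓ be a prime and let G be a subgroup of GL₂(𝔽_ℓ) all of whose elements are upper triangular. If G contains a non-diagonal matrix with repeated eigenvalues, i.e., a matrix [[a,b],[0,a]] with b ≠ 0, then G contains the transvection [[1,1],[0,1]], and the semisimplification G^ss is contained in G. -/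
open Matrix Matrix.GeneralLinearGroup

lemma Matrix.GeneralLinearGroup.ne_zero_of_val_eq_upperTriangular {K : Type*} [Field K]
    {g : GL (Fin 2) K} {a b d : K} (hg : (g : Matrix (Fin 2) (Fin 2) K) = !![a, b; 0, d]) :
    a ≠ 0 := by
  have hdet := g.det_ne_zero
  rw [hg, det_fin_two_of] at hdet
  exact left_ne_zero_of_mul (by simpa using hdet)

lemma Matrix.GeneralLinearGroup.upperTriangular_mul_upperRightHom {K : Type*} [Field K]
    {a : K} (ha : a ≠ 0) (b d : K) :
    !![a, b; 0, d] * (upperRightHom (-(b / a)) : Matrix (Fin 2) (Fin 2) K) = !![a, 0; 0, d] := by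
  ext i j
  fin_cases i <;> fin_cases j <;> simp [field]

lemma Matrix.GeneralLinearGroup.jordanBlock_eq_smul_upperRightHom {K : Type*} [Field K]
    {a : K} (ha : a ≠ 0) (b : K) :
    !![a, b; 0, a] = a • (upperRightHom (b / a) : Matrix (Fin 2) (Fin 2) K) := by
  ext i j
  fin_cases i <;> fin_cases j <;> simp [field]

lemma ZMod.card_sub_one_nsmul {p : ℕ} [Fact p.Prime] (x : ZMod p) : (p - 1) • x = -x := by
  rw [nsmul_eq_mul, Nat.cast_sub (Fact.out : p.Prime).one_le]
  simp

lemma ZMod.pow_card_sub_one_eq_upperRightHom {p : ℕ} [Fact p.Prime] {γ : GL (Fin 2) (ZMod p)}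
    {a b : ZMod p} (ha : a ≠ 0) (hγ : (γ : Matrix (Fin 2) (Fin 2) (ZMod p)) = !![a, b; 0, a]) :
    γ ^ (p - 1) = upperRightHom (-(b / a)) := by
  ext : 1
  rw [Units.val_pow_eq_pow_val, hγ, jordanBlock_eq_smul_upperRightHom ha, smul_pow,
    ← Units.val_pow_eq_pow_val, ← AddChar.map_nsmul_eq_pow, ZMod.pow_card_sub_one_eq_one ha,
    one_smul, ZMod.card_sub_one_nsmul]

lemma Subgroup.strictPeriods_eq_top_of_ne_zero_mem {p : ℕ} [Fact p.Prime]
    {G : Subgroup (GL (Fin 2) (ZMod p))} {c : ZMod p} (hc : c ≠ 0) (hcG : c ∈ G.strictPeriods) :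
    G.strictPeriods = ⊤ := by
  have : Fact (Nat.card (ZMod p)).Prime := by rwa [Nat.card_zmod]
  exact G.strictPeriods.eq_bot_or_eq_top_of_prime_card.resolve_left
    fun h ↦ hc (by simpa [h] using hcG)

theorem transvection_mem_and_semisimplification_subset_general {ℓ : ℕ} (hℓ : ℓ.Prime)
    (G : Subgroup (GL (Fin 2) (ZMod ℓ)))
    (hrep : ∃ γ ∈ G, ∃ a b : ZMod ℓ, b ≠ 0 ∧
      (γ : Matrix (Fin 2) (Fin 2) (ZMod ℓ)) = !![a, b; 0, a]) :
    (∃ t ∈ G, (t : Matrix (Fin 2) (Fin 2) (ZMod ℓ)) = !![1, 1; 0, 1]) ∧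
      G.semisimplification ⊆ (G : Set (GL (Fin 2) (ZMod ℓ))) := by
  have : Fact ℓ.Prime := ⟨hℓ⟩
  obtain ⟨γ, hγG, a, b, hb, hγ⟩ := hrep
  have ha := ne_zero_of_val_eq_upperTriangular hγ
  have hperiods : G.strictPeriods = ⊤ := by
    refine G.strictPeriods_eq_top_of_ne_zero_mem (c := -(b / a)) (by simp [hb, ha]) ?_
    rw [Subgroup.mem_strictPeriods_iff, ← ZMod.pow_card_sub_one_eq_upperRightHom ha hγ]
    exact G.pow_mem hγG _
  have hunip (x : ZMod ℓ) : upperRightHom x ∈ G := by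
    rw [← Subgroup.mem_strictPeriods_iff, hperiods]
    exact AddSubgroup.mem_top x
  refine ⟨⟨upperRightHom 1, hunip 1, rfl⟩, ?_⟩
  rintro g ⟨a', d', b', hg, h, hG, hh⟩
  have ha' := ne_zero_of_val_eq_upperTriangular hh
  have hg_eq : g = h * upperRightHom (-(b' / a')) := by
    ext : 1
    rw [hg, Units.val_mul, hh, upperTriangular_mul_upperRightHom ha']
  exact hg_eq ▸ G.mul_mem hG (hunip _)

/-- Let `ℓ` be a prime and `G` a subgroup of `GL₂(𝔽_ℓ)` all of whose elements
are upper triangular. If `G` contains a non-diagonal matrix with repeated eigenvalues, i.e., a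
matrix `[[a, b], [0, a]]` with `b ≠ 0`, then `G` contains the transvection `[[1, 1], [0, 1]]`,
and `G^ss ⊆ G`. -/
theorem transvection_mem_and_semisimplification_subset {ℓ : ℕ} (hℓ : ℓ.Prime)
    (G : Subgroup (GL (Fin 2) (ZMod ℓ)))
    (hG : ∀ g ∈ G, (g : Matrix (Fin 2) (Fin 2) (ZMod ℓ)) 1 0 = 0)
    (hrep : ∃ γ ∈ G, ∃ a b : ZMod ℓ, b ≠ 0 ∧
      (γ : Matrix (Fin 2) (Fin 2) (ZMod ℓ)) = !![a, b; 0, a]) :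
    (∃ t ∈ G, (t : Matrix (Fin 2) (Fin 2) (ZMod ℓ)) = !![1, 1; 0, 1]) ∧
      G.semisimplification ⊆ (G : Set (GL (Fin 2) (ZMod ℓ))) :=
  transvection_mem_and_semisimplification_subset_general hℓ G hrep
end

section
/- Let ℓ be a prime and let G be a subgroup of GL₂(𝔽_ℓ) all of whose elements are upper triangular. If G is not commutative, then the semisimplification G^ss is contained in G. -/
/-!
On an upper triangular group the diagonal entries are multiplicative, so every commutator is
unipotent, `[[1, x], [0, 1]]`, and `x ≠ 0` for a commutator of two non-commuting elements.
The entries `x` of the unipotent elements of `G` form an additive subgroup of `𝔽_ℓ`, which is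
therefore all of `𝔽_ℓ`. Finally `diag(a, d) = [[a, b], [0, d]] · [[1, -b/a], [0, 1]]`.
-/

open scoped commutatorElement

namespace Subgroup

variable {R : Type*} [CommRing R]

def diagEntryHom (G : Subgroup (GL (Fin 2) R))
    (hG : ∀ g ∈ G, (g : Matrix (Fin 2) (Fin 2) R) 1 0 = 0) (i : Fin 2) : G →* R where
  toFun g := ((g : GL (Fin 2) R) : Matrix (Fin 2) (Fin 2) R) i i
  map_one' := by simp
  map_mul' g h := by
    have hg := hG g g.2
    have hh := hG h h.2
    fin_cases i <;> simp [Matrix.mul_apply, Fin.sum_univ_two, hg, hh]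

theorem commutatorElement_diag_eq_one {G : Subgroup (GL (Fin 2) R)}
    (hG : ∀ g ∈ G, (g : Matrix (Fin 2) (Fin 2) R) 1 0 = 0) {g h : GL (Fin 2) R}
    (hg : g ∈ G) (hh : h ∈ G) (i : Fin 2) :
    (⁅g, h⁆ : GL (Fin 2) R).val i i = 1 := by
  have key : (G.diagEntryHom hG i).toHomUnits ⁅(⟨g, hg⟩ : G), ⟨h, hh⟩⁆ = 1 := by
    rw [map_commutatorElement, commutatorElement_eq_one_iff_mul_comm]
    exact mul_comm _ _
  exact (MonoidHom.coe_toHomUnits _ _).symm.trans (congrArg Units.val key)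

def unitriangularEntries (G : Subgroup (GL (Fin 2) R)) : AddSubgroup R where
  carrier := {x | ∃ u ∈ G, (u : Matrix (Fin 2) (Fin 2) R) = !![1, x; 0, 1]}
  zero_mem' := ⟨1, G.one_mem, by simp [Matrix.one_fin_two]⟩
  add_mem' := by
    rintro x y ⟨u, hu, hux⟩ ⟨v, hv, hvy⟩
    exact ⟨u * v, G.mul_mem hu hv, by simp [hux, hvy, add_comm]⟩
  neg_mem' := by
    rintro x ⟨u, hu, hux⟩
    refine ⟨u⁻¹, G.inv_mem hu, ?_⟩
    rw [Matrix.coe_units_inv, hux]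
    exact Matrix.inv_eq_right_inv (by simp [Matrix.one_fin_two])

theorem exists_ne_zero_mem_unitriangularEntries {G : Subgroup (GL (Fin 2) R)}
    (hG : ∀ g ∈ G, (g : Matrix (Fin 2) (Fin 2) R) 1 0 = 0)
    (hnc : ∃ g ∈ G, ∃ h ∈ G, g * h ≠ h * g) :
    ∃ x ∈ G.unitriangularEntries, x ≠ 0 := by
  obtain ⟨g, hg, h, hh, hgh⟩ := hnc
  have hc : ⁅g, h⁆ ∈ G := G.mul_mem (G.mul_mem (G.mul_mem hg hh) (G.inv_mem hg)) (G.inv_mem hh)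
  have hc_eq : (⁅g, h⁆ : GL (Fin 2) R).val = !![1, (⁅g, h⁆ : GL (Fin 2) R).val 0 1; 0, 1] := by
    conv_lhs => rw [Matrix.eta_fin_two (⁅g, h⁆ : GL (Fin 2) R).val]
    rw [commutatorElement_diag_eq_one hG hg hh 0, commutatorElement_diag_eq_one hG hg hh 1,
      hG _ hc]
  refine ⟨_, ⟨_, hc, hc_eq⟩, fun h0 => hgh (commutatorElement_eq_one_iff_mul_comm.1 ?_)⟩
  ext : 1
  rw [hc_eq, h0, Units.val_one, Matrix.one_fin_two]

theorem unitriangularEntries_eq_top {p : ℕ} [Fact p.Prime]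
    {G : Subgroup (GL (Fin 2) (ZMod p))} {x : ZMod p} (hx : x ∈ G.unitriangularEntries)
    (hx0 : x ≠ 0) : G.unitriangularEntries = ⊤ := by
  have : Fact (Nat.card (ZMod p)).Prime := by rwa [Nat.card_zmod]
  exact G.unitriangularEntries.eq_bot_or_eq_top_of_prime_card.resolve_left
    fun hbot => hx0 (by rwa [hbot, AddSubgroup.mem_bot] at hx)

theorem semisimplification_subset_of_unitriangularEntries_eq_top {ℓ : ℕ}
    {G : Subgroup (GL (Fin 2) (ZMod ℓ))} (hU : G.unitriangularEntries = ⊤) :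
    G.semisimplification ⊆ G := by
  rintro g ⟨a, d, b, hg, u, hu, hub⟩
  have ha : IsUnit a := by
    refine isUnit_of_mul_isUnit_left (y := d) ?_
    simpa [hg, Matrix.det_fin_two] using Matrix.isUnits_det_units g
  obtain ⟨v, hv, hvb⟩ : -(a⁻¹ * b) ∈ G.unitriangularEntries := hU ▸ AddSubgroup.mem_top _
  have : g = u * v := by
    ext : 1
    rw [hg, Units.val_mul, hub, hvb, Matrix.mul_fin_two]
    simp [← mul_assoc, ZMod.mul_inv_of_unit a ha]
  exact this ▸ G.mul_mem hu hv

end Subgroup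

/-- Let `ℓ` be a prime and `G` a subgroup of `GL₂(𝔽_ℓ)` all of whose elements
are upper triangular. If `G` is not commutative, then `G^ss ⊆ G`. -/
theorem semisimplification_subset_of_not_commutative {ℓ : ℕ} (hℓ : ℓ.Prime)
    (G : Subgroup (GL (Fin 2) (ZMod ℓ)))
    (hG : ∀ g ∈ G, (g : Matrix (Fin 2) (Fin 2) (ZMod ℓ)) 1 0 = 0)
    (hnc : ∃ g ∈ G, ∃ h ∈ G, g * h ≠ h * g) :
    G.semisimplification ⊆ (G : Set (GL (Fin 2) (ZMod ℓ))) := by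
  have : Fact ℓ.Prime := ⟨hℓ⟩
  obtain ⟨x, hx, hx0⟩ := Subgroup.exists_ne_zero_mem_unitriangularEntries hG hnc
  exact Subgroup.semisimplification_subset_of_unitriangularEntries_eq_top
    (Subgroup.unitriangularEntries_eq_top hx hx0)
end
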